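/- Let x′ ∈ {0,1}^{n′}, let Z = {z^1,…,z^R} be any multiset of R traces of x′, let w be the output of BMA(n′, Z), and suppose t > M is an integer with w_{[0:t−1]} = x′_{[0:t−1]}. If i ∈ [R] satisfies distance_i(t−M) = 0 and D_i ∩ [position_i(t−M)+1 : position_i(t−M)+M] = D_i ∩ [t−M : t] = ∅, then distance_i(t) = 0. -/

import Mathlib

open scoped Classical

namespace TraceRec

/-- The subword `x_{[a:b]} = (x_a, …, x_b)` of a string. -/
def subword (x : List Bool) (a b : ℕ) : List Bool := (x.drop a).take (b + 1 - a)

/-- The trace of `x` obtained by deleting the coordinates in the deletion set `D`. -/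
def trace (x : List Bool) (D : Finset ℕ) : List Bool :=
  ((List.range x.length).filter (fun i => decide (i ∉ D))).map (fun i => x.getD i false)

/-- Probability weight of the deletion set `D` for an `n`-bit string at deletion rate `δ`:
each of the `n` coordinates is deleted independently with probability `δ`. -/
noncomputable def delWeight (δ : ℝ) (n : ℕ) (D : Finset ℕ) : ℝ :=
  δ ^ D.card * (1 - δ) ^ (n - D.card)

/-- Probability, over `N` independent deletion sets for an `n`-bit string, of event `P`. -/
noncomputable def prSets (δ : ℝ) (n N : ℕ) (P : (Fin N → Finset ℕ) → Prop) : ℝ :=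
  ∑ Ds ∈ Fintype.piFinset (fun _ : Fin N => (Finset.range n).powerset),
    (∏ i, delWeight δ n (Ds i)) * (if P Ds then 1 else 0)

/-- Probability of event `P` over `N` independent traces of `x` drawn from `Del_δ(x)`. -/
noncomputable def prTraces (δ : ℝ) (x : List Bool) (N : ℕ)
    (P : (Fin N → List Bool) → Prop) : ℝ :=
  prSets δ x.length N (fun Ds => P (fun i => trace x (Ds i)))

/-- Probability of event `P` over one trace of `x` drawn from `Del_δ(x)`. -/
noncomputable def prOne (δ : ℝ) (x : List Bool) (P : List Bool → Prop) : ℝ :=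
  prTraces δ x 1 (fun ys => P (ys 0))

/-- The set of all binary strings of length `n`. -/
def binStrings (n : ℕ) : Finset (List Bool) :=
  Finset.image (fun f : Fin n → Bool => List.ofFn f) Finset.univ

/-- Majority bit of `N` bits. -/
def majority (N : ℕ) (b : Fin N → Bool) : Bool :=
  decide (N ≤ 2 * (Finset.univ.filter (fun i => b i = true)).card)

/-- Padding of a trace with `0`s (`false`) at the end. -/
def pad (z : List Bool) : ℕ → Bool := fun j => z.getD j false

/-- The pointers `current_i(t)` in the Bitwise Majority Alignment algorithm. -/
def bmaCur (N : ℕ) (u : Fin N → ℕ → Bool) : ℕ → Fin N → ℕ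
  | 0 => fun _ => 0
  | t + 1 => fun i =>
      let c := bmaCur N u t
      if u i (c i) = majority N (fun j => u j (c j)) then c i + 1 else c i

/-- The bit `w_t` output by BMA at round `t`. -/
def bmaBit (N : ℕ) (u : Fin N → ℕ → Bool) (t : ℕ) : Bool :=
  majority N (fun j => u j (bmaCur N u t j))

/-- The Bitwise Majority Alignment algorithm on `N` traces, run for `n'` rounds. -/
def BMA (n' N : ℕ) (z : Fin N → List Bool) : List Bool :=
  (List.range n').map (fun t => bmaBit N (fun i => pad (z i)) t)

/-- `fmap D j`: the original position of the `j`-th surviving bit under deletion set `D`,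
i.e. the unique `k ∉ D` with `k - |D ∩ [0:k-1]| = j`. -/
noncomputable def fmap (D : Finset ℕ) (j : ℕ) : ℕ := Nat.nth (fun k => k ∉ D) j

/-- `position_i(t) = f_i(current_i(t))` in the run of BMA. -/
noncomputable def positionOf {R : ℕ} (z : Fin R → List Bool) (D : Fin R → Finset ℕ)
    (t : ℕ) (i : Fin R) : ℕ :=
  fmap (D i) (bmaCur R (fun i => pad (z i)) t i)

/-- `distance_i(t) = position_i(t) - t` in the run of BMA. -/
noncomputable def distOf {R : ℕ} (z : Fin R → List Bool) (D : Fin R → Finset ℕ)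
    (t : ℕ) (i : Fin R) : ℤ :=
  (positionOf z D t i : ℤ) - t

/-- `z` is a prefix of the infinite periodic string `s^∞`. -/
def periodicPrefix (s z : List Bool) : Prop :=
  ∀ j < z.length, z.getD j false = s.getD (j % s.length) false

/-- `z` is an `s`-desert for some nonempty `s` of length at most `C`
(with desert length threshold `M`). -/
def isDesert (C M : ℕ) (z : List Bool) : Prop :=
  ∃ s : List Bool, s ≠ [] ∧ s.length ≤ C ∧ M ≤ z.length ∧ periodicPrefix s z

/-- Location `i` of `x` is deep in a desert: `x_{[i-m:i+m]}` is a desert. -/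
def deepInDesert (C m : ℕ) (x : List Bool) (i : ℕ) : Prop :=
  m ≤ i ∧ isDesert C (2 * m + 1) (subword x (i - m) (i + m))

/-- `x` has a desert: some subword of `x` is a desert. -/
def hasDesert (C M : ℕ) (x : List Bool) : Prop :=
  ∃ a b, isDesert C M (subword x a b)

/-- `r` is the first location of `x` that is deep in a desert. -/
def firstDeep (C m : ℕ) (x : List Bool) (r : ℕ) : Prop :=
  deepInDesert C m x r ∧ ∀ i < r, ¬ deepInDesert C m x i

/-- The deletion rate `δ = n^{-(1/3+ε)}`. -/
noncomputable def delta (ε : ℝ) (n : ℕ) : ℝ := (n : ℝ) ^ (-(1/3 + ε))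

/-- `C = ⌈100/ε⌉`. -/
noncomputable def Cp (ε : ℝ) : ℕ := ⌈(100 : ℝ) / ε⌉₊

/-- `m = ⌈n^{1/3}⌉`. -/
noncomputable def mp (n : ℕ) : ℕ := ⌈(n : ℝ) ^ ((1 : ℝ) / 3)⌉₊

/-- `M = 2m + 1`. -/
noncomputable def Mp (n : ℕ) : ℕ := 2 * mp n + 1

/-- `σ = ⌈√(δn)·log n⌉`. -/
noncomputable def sigp (ε : ℝ) (n : ℕ) : ℕ :=
  ⌈Real.sqrt (delta ε n * n) * Real.log n⌉₊

/-- A family of deletion sets (for traces of an `n'`-bit string) is good. -/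
def goodFam (C M n' : ℕ) {R : ℕ} (D : Fin R → Finset ℕ) : Prop :=
  (∀ i : Fin R, ∀ a, a + 2 * C ^ 2 * M ≤ n' →
      (D i ∩ Finset.Ico a (a + 2 * C ^ 2 * M)).card ≤ C) ∧
  (∀ a, a + (M + C + 1) ≤ n' →
      ((Finset.univ.filter
          (fun i : Fin R => (D i ∩ Finset.Ico a (a + (M + C + 1))).Nonempty)).card : ℝ)
        ≤ (R : ℝ) / (C : ℝ) ^ 3)

/-- Two tuples of strings are `η`-close as multisets: one is obtained from the other by
substituting at most `ηN` of its strings. -/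
def closeTuples (η : ℝ) {N : ℕ} (z z' : Fin N → List Bool) : Prop :=
  ∃ π : Equiv.Perm (Fin N),
    ((Finset.univ.filter (fun i => z i ≠ z' (π i))).card : ℝ) ≤ η * N

/-- `s` is a minimal-length pattern for the desert `x_{[r-m:r+m]}` around location `r`. -/
def minimalPattern (C m : ℕ) (x : List Bool) (r : ℕ) (s : List Bool) : Prop :=
  s ≠ [] ∧ s.length ≤ C ∧ periodicPrefix s (subword x (r - m) (r + m)) ∧
    ∀ s' : List Bool, s' ≠ [] → periodicPrefix s' (subword x (r - m) (r + m)) →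
      s.length ≤ s'.length

/-- `e` is the end position of the desert containing `x_r` (for pattern length `k`):
the smallest integer `≥ r + m` such that `x_{e+1} ≠ x_{e+1-k}`. -/
def isEnd (x : List Bool) (r m k e : ℕ) : Prop :=
  r + m ≤ e ∧ x.getD (e + 1) false ≠ x.getD (e + 1 - k) false ∧
    ∀ j, r + m ≤ j → j < e → x.getD (j + 1) false = x.getD (j + 1 - k) false

/-- The tail string `tail = x_{[end-k+2 : end-k+8σ+1]}` of the desert. -/
def tailStr (x : List Bool) (k e σ : ℕ) : List Bool :=
  subword x (e - k + 2) (e - k + 8 * σ + 1)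

/-- `last(y)` for the trace of `x` with deletion set `D`: the position in the trace of the
last surviving bit of `x_{[0:e]}`, or `-1` if all of `x_{[0:e]}` is deleted. -/
def lastPos (D : Finset ℕ) (e : ℕ) : ℤ :=
  (((Finset.range (e + 1)).filter (fun i => decide (i ∉ D))).card : ℤ) - 1

/-- `w ∈ Cyc_s`: `w` is a cyclic shift of `s`. -/
def inCyc (s w : List Bool) : Prop := ∃ j, w = s.rotate j

/-- `sig` is the signature of the desert of `x` with pattern `s` ending at `e`. -/
def isSig (x s : List Bool) (e σ : ℕ) (sig : List Bool) : Prop :=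
  (∃ d, e + s.length + 1 ≤ d ∧ d ≤ e + 8 * σ - s.length + 1 ∧
      ¬ inCyc s (subword x (d + 1 - s.length) d) ∧
      (∀ d', e + s.length + 1 ≤ d' → d' < d → inCyc s (subword x (d' + 1 - s.length) d')) ∧
      sig = subword x (e - s.length + 2) d) ∨
  ((∀ d, e + s.length + 1 ≤ d → d ≤ e + 8 * σ - s.length + 1 →
      inCyc s (subword x (d + 1 - s.length) d)) ∧
    sig = tailStr x s.length e σ)

/-- A string `z` is in the right form `w ∘ sig`, where the leftmost `k`-bit subword of `z`
not in `Cyc_s` consists of the first `k` bits of the trailing occurrence of `sig`. -/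
def rightForm (s sig z : List Bool) : Prop :=
  ∃ w : List Bool, z = w ++ sig ∧
    ∀ a < w.length, inCyc s ((z.drop a).take s.length)

/-!
Once trace `i` is aligned (its pointer reads the bit of `x'` at the current round), it stays
aligned for as long as BMA outputs the correct bits of `x'` and the next bit of `x'` survives in
trace `i`: the pointer then reads exactly the majority bit, so it advances by one, and because the
next original position is not deleted its position also advances by exactly one.
-/

theorem infinite_setOf_notMem (D : Finset ℕ) : {k | k ∉ D}.Infinite :=
  D.finite_toSet.infinite_compl

theorem getElem_filter_range (p : ℕ → Prop) [DecidablePred p] (n j : ℕ)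
    (hj : j < ((List.range n).filter (fun k => decide (p k))).length) :
    ((List.range n).filter (fun k => decide (p k)))[j] = Nat.nth p j := by
  induction n with
  | zero => simp at hj
  | succ n ih =>
    simp only [List.range_succ, List.filter_append] at hj ⊢
    by_cases hjn : j < ((List.range n).filter (fun k => decide (p k))).length
    · rw [List.getElem_append_left hjn]
      exact ih hjn
    · have hpn : p n := by
        by_contra hpn
        exact hjn (by simpa [hpn] using hj)
      have hlen : ((List.range n).filter (fun k => decide (p k))).length = Nat.count p n := by
        rw [Nat.count, List.countP_eq_length_filter]
      obtain rfl : j = Nat.count p n := by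
        have : j < Nat.count p n + 1 := by simpa [hpn, hlen] using hj
        omega
      rw [List.getElem_append_right hlen.le]
      simp [hpn, hlen, Nat.nth_count hpn]

theorem pad_trace (x : List Bool) (D : Finset ℕ) (j : ℕ) :
    pad (trace x D) j = x.getD (fmap D j) false := by
  have hlen : (trace x D).length = Nat.count (fun k => k ∉ D) x.length := by
    simp [trace, Nat.count, List.countP_eq_length_filter]
  have hlt := Nat.lt_nth_iff_count_lt (infinite_setOf_notMem D) (a := j) (b := x.length)
  rw [← hlen] at hlt
  by_cases hj : j < (trace x D).length
  · have hj' : j < ((List.range x.length).filter (fun k => decide (k ∉ D))).length := by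
      simpa [trace] using hj
    rw [pad, fmap, List.getD_eq_getElem _ _ hj, List.getD_eq_getElem _ _ (hlt.1 hj)]
    simp only [trace, List.getElem_map, getElem_filter_range _ _ _ hj']
    rw [List.getD_eq_getElem]
  · rw [pad, fmap, List.getD_eq_default _ _ (not_lt.1 hj),
      List.getD_eq_default _ _ (not_lt.1 (mt hlt.2 hj))]

theorem fmap_succ_of_notMem {D : Finset ℕ} {j : ℕ} (h : fmap D j + 1 ∉ D) :
    fmap D (j + 1) = fmap D j + 1 := by
  have hinf := infinite_setOf_notMem D
  have hcount : Nat.count (fun k => k ∉ D) (fmap D j + 1) = j + 1 := by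
    rw [Nat.count_succ_eq_succ_count_iff.2 (Nat.nth_mem_of_infinite hinf j),
      fmap, Nat.count_nth_of_infinite hinf]
  rw [← hcount, fmap, Nat.nth_count h]

theorem bmaCur_succ_of_eq_bmaBit {N : ℕ} {u : Fin N → ℕ → Bool} {τ : ℕ} {i : Fin N}
    (h : u i (bmaCur N u τ i) = bmaBit N u τ) :
    bmaCur N u (τ + 1) i = bmaCur N u τ i + 1 :=
  if_pos h

theorem bmaBit_eq_of_subword_BMA_eq {n' N : ℕ} {z : Fin N → List Bool} {x : List Bool}
    {t τ : ℕ}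
    (hw : subword (BMA n' N z) 0 (t - 1) = subword x 0 (t - 1)) (ht : t ≤ n') (hτ : τ < t) :
    bmaBit N (fun i => pad (z i)) τ = x.getD τ false := by
  have hτw := congrArg (·[τ]?) hw
  simp only [subword, List.drop_zero, List.getElem?_take, BMA,
    if_pos (show τ < t - 1 + 1 - 0 by omega), List.getElem?_map,
    List.getElem?_range (show τ < n' by omega), Option.map_some] at hτw
  rw [List.getD_eq_getElem?_getD, ← hτw, Option.getD_some]

theorem fmap_bmaCur_add {N : ℕ} {u : Fin N → ℕ → Bool} {i : Fin N} {x : List Bool}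
    {D : Finset ℕ} (hu : u i = pad (trace x D)) {s : ℕ}
    (h0 : fmap D (bmaCur N u s i) = s) :
    ∀ d, (∀ τ, s ≤ τ → τ < s + d → bmaBit N u τ = x.getD τ false) →
      (∀ τ, s < τ → τ ≤ s + d → τ ∉ D) → fmap D (bmaCur N u (s + d) i) = s + d
  | 0, _, _ => h0
  | d + 1, hbits, hdel => by
    have ih : fmap D (bmaCur N u (s + d) i) = s + d :=
      fmap_bmaCur_add hu h0 d (fun τ h₁ h₂ => hbits τ h₁ (by omega))
        (fun τ h₁ h₂ => hdel τ h₁ (by omega))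
    have hread : u i (bmaCur N u (s + d) i) = bmaBit N u (s + d) := by
      rw [hu, pad_trace, ih, hbits _ le_self_add (by omega)]
    have hnext : fmap D (bmaCur N u (s + d) i) + 1 ∉ D := by
      rw [ih]
      exact hdel _ (by omega) le_rfl
    rw [← add_assoc, bmaCur_succ_of_eq_bmaBit hread, fmap_succ_of_notMem hnext, ih]

theorem statement8_general (n n' R : ℕ)
    (x' : List Bool)
    (D : Fin R → Finset ℕ)
    (z : Fin R → List Bool) (hz : ∀ i, z i = trace x' (D i))
    (t : ℕ) (ht : Mp n < t) (ht' : t ≤ n')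
    (hw : subword (BMA n' R z) 0 (t - 1) = subword x' 0 (t - 1))
    (i : Fin R)
    (h0 : distOf z D (t - Mp n) i = 0)
    (h1 : D i ∩ Finset.Icc (positionOf z D (t - Mp n) i + 1)
        (positionOf z D (t - Mp n) i + Mp n) = ∅) :
    distOf z D t i = 0 := by
  have hpos : positionOf z D (t - Mp n) i = t - Mp n := by
    unfold distOf at h0
    omega
  have hdel : ∀ τ, t - Mp n < τ → τ ≤ t - Mp n + Mp n → τ ∉ D i :=
    fun τ h₁ h₂ hτ => Finset.eq_empty_iff_forall_notMem.1 h1 τ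
      (Finset.mem_inter.2 ⟨hτ, Finset.mem_Icc.2 (by rw [hpos]; omega)⟩)
  have hbits : ∀ τ, t - Mp n ≤ τ → τ < t - Mp n + Mp n →
      bmaBit R (fun i => pad (z i)) τ = x'.getD τ false :=
    fun τ _ hτ => bmaBit_eq_of_subword_BMA_eq hw ht' (by omega)
  have hfinal := fmap_bmaCur_add (congrArg pad (hz i)) hpos (Mp n) hbits hdel
  rw [Nat.sub_add_cancel ht.le] at hfinal
  simp [distOf, positionOf, hfinal]

/-- Lemma 11: a deletion-free window keeps an aligned trace aligned. -/
theorem statement8 (ε : ℝ) (hε : 0 < ε) (n n' R : ℕ) (hn' : n' ≤ n)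
    (x' : List Bool) (hx' : x'.length = n')
    (D : Fin R → Finset ℕ) (hD : ∀ i, D i ⊆ Finset.range n')
    (z : Fin R → List Bool) (hz : ∀ i, z i = trace x' (D i))
    (t : ℕ) (ht : Mp n < t) (ht' : t ≤ n')
    (hw : subword (BMA n' R z) 0 (t - 1) = subword x' 0 (t - 1))
    (i : Fin R)
    (h0 : distOf z D (t - Mp n) i = 0)
    (h1 : D i ∩ Finset.Icc (positionOf z D (t - Mp n) i + 1)
        (positionOf z D (t - Mp n) i + Mp n) = ∅)
    (h2 : D i ∩ Finset.Icc (t - Mp n) t = ∅) :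
    distOf z D t i = 0 :=
  statement8_general n n' R x' D z hz t ht ht' hw i h0 h1

end TraceRec
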